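/- arXiv:2502.03414 — 2 statements merged into one kernel-verified Lean document; each statement's English description precedes it below -/
import Mathlib

section
/- Doubly robust identification under a misspecified propensity score: suppose π⁰_i(X_i; ḡ_t), π⁰_i(X_i; ḡ'_t) are arbitrary measurable functions bounded in (ε, 1−ε), and μ_{i,ḡ'_t,δ}(X_i) = E[Δ_δ Y_i | X_i, Ḡ_it = ḡ'_t] is the true outcome regression. Then for each i, E[(h_{i1}(Ḡ_it) − h⁰_{i0}(Ḡ_it, X_i))·(Δ_δ Y_i − μ_{i,ḡ'_t,δ}(X_i))] = E[Δ_δ Y_i | Ḡ_it = ḡ_t] − E[μ_{i,ḡ'_t,δ}(X_i) | Ḡ_it = ḡ_t], where h_{i1}(Ḡ) = 1(Ḡ=ḡ_t)/P(Ḡ_it=ḡ_t) and h⁰_{i0}(Ḡ, X) = 1(Ḡ=ḡ'_t)π⁰(X;ḡ_t) / (π⁰(X;ḡ'_t)·E[1(Ḡ_it=ḡ'_t)π⁰(X_i;ḡ_t)/π⁰(X_i;ḡ'_t)]). That is, the misspecified-propensity weighted moment recovers the outcome-regression identified quantity. -/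
/-!
The outcome regression `μ` is characterised by `E[(ΔY - μ(X)) f(X); Ḡ = ḡ'] = 0` for every
bounded measurable `f`. The misspecified weight `h⁰₀` is `1(Ḡ = ḡ')` times such a function of `X`,
namely `π⁰(X; ḡ) / π⁰(X; ḡ') / D`, bounded because `π⁰(·; ḡ') > ε > 0`; so its term vanishes
whatever `π⁰` is, and only the `h₁` term survives.
-/

open MeasureTheory

theorem abs_div_div_le_of_abs_le_of_le {a b M ε : ℝ} (hε : 0 < ε) (ha : |a| ≤ M) (hb : ε ≤ b)
    (D : ℝ) : |a / b / D| ≤ M / ε / |D| := by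
  have hb₀ : 0 < b := hε.trans_le hb
  rw [abs_div, abs_div, abs_of_pos hb₀]
  gcongr
  exact (abs_nonneg a).trans ha

theorem setIntegral_sub_mul_eq_zero {Ω : Type*} [MeasurableSpace Ω] {P : Measure Ω}
    {Y Z g : Ω → ℝ} {s : Set Ω} {C : ℝ}
    (hY : Integrable Y P) (hZ : Integrable Z P) (hg : AEStronglyMeasurable g P)
    (hgC : ∀ ω, |g ω| ≤ C) (hYZ : ∫ ω in s, Y ω * g ω ∂P = ∫ ω in s, Z ω * g ω ∂P) :
    ∫ ω in s, (Y ω - Z ω) * g ω ∂P = 0 := by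
  have hbound : ∀ᵐ ω ∂P, ‖g ω‖ ≤ C := ae_of_all _ hgC
  simp_rw [sub_mul]
  rw [integral_sub (hY.mul_bdd hg hbound).integrableOn (hZ.mul_bdd hg hbound).integrableOn,
    hYZ, sub_self]

theorem doubly_robust_misspecified_propensity_general
    {Ω : Type*} [MeasurableSpace Ω] (P : Measure Ω) [IsProbabilityMeasure P]
    {𝒢 : Type*} [MeasurableSpace 𝒢] [MeasurableSingletonClass 𝒢]
    {𝒳 : Type*} [MeasurableSpace 𝒳]
    (ΔY : Ω → ℝ) (hΔY : Integrable ΔY P)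
    (G : Ω → 𝒢) (hG : Measurable G) (X : Ω → 𝒳) (hX : Measurable X)
    (g g' : 𝒢)
    (ε : ℝ) (hε : 0 < ε)
    -- arbitrary (possibly misspecified) propensity functions, bounded in (ε, 1−ε)
    (π0g π0g' : 𝒳 → ℝ) (hπ0gmeas : Measurable π0g) (hπ0g'meas : Measurable π0g')
    (hπ0gb : ∀ x, ε < π0g x ∧ π0g x < 1 - ε)
    (hπ0g'b : ∀ x, ε < π0g' x ∧ π0g' x < 1 - ε)
    -- the true outcome regression μ(X) = E[Δ_δY | X, Ḡ = ḡ'_t]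
    (μ : 𝒳 → ℝ) (hμmeas : Measurable μ) (hμb : ∃ C, ∀ x, |μ x| ≤ C)
    (hμ : ∀ f : 𝒳 → ℝ, Measurable f → (∃ C, ∀ x, |f x| ≤ C) →
      ∫ ω in {ω | G ω = g'}, ΔY ω * f (X ω) ∂P
        = ∫ ω in {ω | G ω = g'}, μ (X ω) * f (X ω) ∂P) :
    (let Ig : Ω → ℝ := Set.indicator {ω' | G ω' = g} (fun _ => (1:ℝ))
     let Ig' : Ω → ℝ := Set.indicator {ω' | G ω' = g'} (fun _ => (1:ℝ))
     let p1 : ℝ := (P {ω | G ω = g}).toReal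
     let D : ℝ := ∫ ω, Ig' ω * π0g (X ω) / π0g' (X ω) ∂P
     let h1 : Ω → ℝ := fun ω => Ig ω / p1
     let h0 : Ω → ℝ := fun ω => Ig' ω * π0g (X ω) / (π0g' (X ω) * D)
     ∫ ω, (h1 ω - h0 ω) * (ΔY ω - μ (X ω)) ∂P
       = (∫ ω in {ω | G ω = g}, ΔY ω ∂P) / p1
         - (∫ ω in {ω | G ω = g}, μ (X ω) ∂P) / p1) := by
  intro Ig Ig' p1 D h1 h0
  have hA : MeasurableSet {ω | G ω = g} := hG (measurableSet_singleton g)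
  have hA' : MeasurableSet {ω | G ω = g'} := hG (measurableSet_singleton g')
  obtain ⟨Cμ, hCμ⟩ := hμb
  have hμX : Integrable (fun ω => μ (X ω)) P :=
    .of_bound (hμmeas.comp hX).aestronglyMeasurable Cμ (ae_of_all _ fun ω => hCμ (X ω))
  let R : Ω → ℝ := fun ω => ΔY ω - μ (X ω)
  let f : 𝒳 → ℝ := fun x => π0g x / π0g' x / D
  have hf : Measurable f := (hπ0gmeas.div hπ0g'meas).div_const D
  have hfC : ∀ x, |f x| ≤ (1 - ε) / ε / |D| := fun x =>
    abs_div_div_le_of_abs_le_of_le hε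
      (abs_le.mpr ⟨by linarith [hπ0gb x], (hπ0gb x).2.le⟩) (hπ0g'b x).1.le D
  have hR : Integrable R P := hΔY.sub hμX
  have hRf : Integrable (fun ω => R ω * f (X ω)) P :=
    hR.mul_bdd (hf.comp hX).aestronglyMeasurable (ae_of_all _ fun ω => hfC (X ω))
  have hsplit : ∀ ω, (h1 ω - h0 ω) * R ω =
      {ω | G ω = g}.indicator R ω / p1 - {ω | G ω = g'}.indicator (fun ω => R ω * f (X ω)) ω := by
    intro ω
    simp only [h1, h0, Ig, Ig', f, Set.indicator]
    split_ifs <;> ring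
  have hh0 : ∫ ω in {ω | G ω = g'}, R ω * f (X ω) ∂P = 0 :=
    setIntegral_sub_mul_eq_zero hΔY hμX (hf.comp hX).aestronglyMeasurable (fun ω => hfC (X ω))
      (hμ f hf ⟨_, hfC⟩)
  rw [integral_congr_ae (ae_of_all _ hsplit),
    integral_sub ((hR.indicator hA).div_const p1) (hRf.indicator hA'),
    integral_div, integral_indicator hA, integral_indicator hA', hh0, sub_zero,
    integral_sub hΔY.integrableOn hμX.integrableOn, sub_div]

/-- Doubly robust identification under a misspecified propensity
score: if `π⁰(·; ḡ_t), π⁰(·; ḡ'_t)` are arbitrary measurable functions bounded in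
`(ε, 1−ε)` and `μ(X) = E[Δ_δY | X, Ḡ = ḡ'_t]` is the true outcome regression
(characterized against bounded measurable test functions of `X`), then
`E[(h₁(Ḡ) − h⁰₀(Ḡ, X))·(Δ_δY − μ(X))] = E[Δ_δY | Ḡ = ḡ_t] − E[μ(X) | Ḡ = ḡ_t]`,
where `h₁(Ḡ) = 1(Ḡ=ḡ_t)/P(Ḡ=ḡ_t)` and
`h⁰₀(Ḡ,X) = 1(Ḡ=ḡ'_t)π⁰(X;ḡ_t)/(π⁰(X;ḡ'_t)·E[1(Ḡ=ḡ'_t)π⁰(X;ḡ_t)/π⁰(X;ḡ'_t)])`. -/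
theorem doubly_robust_misspecified_propensity
    {Ω : Type*} [MeasurableSpace Ω] (P : Measure Ω) [IsProbabilityMeasure P]
    {𝒢 : Type*} [MeasurableSpace 𝒢] [MeasurableSingletonClass 𝒢]
    {𝒳 : Type*} [MeasurableSpace 𝒳]
    (ΔY : Ω → ℝ) (hΔY : Integrable ΔY P) (hΔYb : ∃ C, ∀ ω, |ΔY ω| ≤ C)
    (G : Ω → 𝒢) (hG : Measurable G) (X : Ω → 𝒳) (hX : Measurable X)
    (g g' : 𝒢)
    (hp : 0 < (P {ω | G ω = g}).toReal) (hp' : 0 < (P {ω | G ω = g'}).toReal)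
    (ε : ℝ) (hε : 0 < ε)
    -- arbitrary (possibly misspecified) propensity functions, bounded in (ε, 1−ε)
    (π0g π0g' : 𝒳 → ℝ) (hπ0gmeas : Measurable π0g) (hπ0g'meas : Measurable π0g')
    (hπ0gb : ∀ x, ε < π0g x ∧ π0g x < 1 - ε)
    (hπ0g'b : ∀ x, ε < π0g' x ∧ π0g' x < 1 - ε)
    -- the true outcome regression μ(X) = E[Δ_δY | X, Ḡ = ḡ'_t]
    (μ : 𝒳 → ℝ) (hμmeas : Measurable μ) (hμb : ∃ C, ∀ x, |μ x| ≤ C)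
    (hμ : ∀ f : 𝒳 → ℝ, Measurable f → (∃ C, ∀ x, |f x| ≤ C) →
      ∫ ω in {ω | G ω = g'}, ΔY ω * f (X ω) ∂P
        = ∫ ω in {ω | G ω = g'}, μ (X ω) * f (X ω) ∂P) :
    (let Ig : Ω → ℝ := Set.indicator {ω' | G ω' = g} (fun _ => (1:ℝ))
     let Ig' : Ω → ℝ := Set.indicator {ω' | G ω' = g'} (fun _ => (1:ℝ))
     let p1 : ℝ := (P {ω | G ω = g}).toReal
     let D : ℝ := ∫ ω, Ig' ω * π0g (X ω) / π0g' (X ω) ∂P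
     let h1 : Ω → ℝ := fun ω => Ig ω / p1
     let h0 : Ω → ℝ := fun ω => Ig' ω * π0g (X ω) / (π0g' (X ω) * D)
     ∫ ω, (h1 ω - h0 ω) * (ΔY ω - μ (X ω)) ∂P
       = (∫ ω in {ω | G ω = g}, ΔY ω ∂P) / p1
         - (∫ ω in {ω | G ω = g}, μ (X ω) ∂P) / p1) :=
  doubly_robust_misspecified_propensity_general P ΔY hΔY G hG X hX g g' ε hε π0g π0g' hπ0gmeas
    hπ0g'meas hπ0gb hπ0g'b μ hμmeas hμb hμ
end

section
/- Conservative-bias structure of the empirical exposure probability estimator: let G_1,…,G_n be {0,1}-valued random variables with p_i = P(G_i = 1), p̄ = (1/n)∑_i p_i, and p̂ = (1/n)∑_i G_i. Suppose p̂ − p̄ → 0 in probability and p̄ ≥ ε > 0 for all n, and let Ψ_1,…,Ψ_n be uniformly bounded reals with means Ψ. Then (1/n)∑_i Ψ_i(p_i − p̂)/p̂ − (1/p̄)·Cov_n(Ψ_i, p_i) → 0 in probability, where Cov_n(Ψ_i, p_i) = (1/n)∑_i Ψ_i p_i − Ψ p̄ is the sample covariance; in particular if all Ψ_i are equal or all p_i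 are equal, the limit of (1/n)∑_i Ψ_i(p_i − p̂)/p̂ is 0. -/
/-!
With `S = 𝔼 Ψ p`, `p̄ = 𝔼 p` and `q = p̂`, the error of the estimator around `Cov_n(Ψ, p) / p̄`
is exactly `S (q⁻¹ - p̄⁻¹)` as soon as `q ≠ 0`. Since `|S| ≤ M` and `p̄ ≥ ε`, this is small
uniformly in `n` and `ω` whenever `|q - p̄|` is, so convergence in probability passes from
`p̂ - p̄` to the error. If `Ψ` or `p` is constant the covariance vanishes.
-/

open MeasureTheory Filter
open scoped BigOperators

open Finset in
theorem one_div_mul_sum_eq_expect {n : ℕ} (v : Fin n → ℝ) :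
    (1 / n : ℝ) * ∑ i, v i = 𝔼 i, v i := by
  rw [expect_eq_sum_div_card, card_univ, Fintype.card_fin, one_div_mul_eq_div]

theorem abs_mul_inv_sub_inv_lt {S x y M ε δ : ℝ} (hε : 0 < ε) (hy : ε ≤ y) (hS : |S| ≤ M)
    (hxy : |x - y| < min (ε / 2) (δ * ε ^ 2 / (2 * (|M| + 1)))) :
    |S * (x⁻¹ - y⁻¹)| < δ := by
  set η := δ * ε ^ 2 / (2 * (|M| + 1))
  have hxy₁ : |x - y| < ε / 2 := hxy.trans_le (min_le_left _ _)
  have hxy₂ : |x - y| < η := hxy.trans_le (min_le_right _ _)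
  have hx : ε / 2 < x := by linarith [(abs_lt.mp hxy₁).1]
  have hxy_ge : ε ^ 2 / 2 ≤ x * y := by nlinarith
  have hxy_pos : 0 < x * y := lt_of_lt_of_le (by positivity) hxy_ge
  have hS' : |S| < |M| + 1 := by linarith [le_abs_self M]
  calc |S * (x⁻¹ - y⁻¹)| = |S| * |x - y| / (x * y) := by
        rw [inv_sub_inv (by linarith) (by linarith), abs_mul, abs_div, abs_sub_comm,
          abs_of_pos hxy_pos, mul_div_assoc]
    _ < (|M| + 1) * η / (x * y) := by gcongr
    _ ≤ (|M| + 1) * η / (ε ^ 2 / 2) := by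
        have : 0 ≤ η := (abs_nonneg _).trans hxy₂.le
        gcongr
    _ = δ := by simp only [η]; field_simp

namespace Finset

variable {ι : Type*} (s : Finset ι)

/-- The paper's `Cov_n(f, g)`. -/
noncomputable def empiricalCov (f g : ι → ℝ) : ℝ :=
  𝔼 i ∈ s, f i * g i - (𝔼 i ∈ s, f i) * 𝔼 i ∈ s, g i

theorem empiricalCov_comm (f g : ι → ℝ) : s.empiricalCov f g = s.empiricalCov g f := by
  simp only [empiricalCov, mul_comm]

theorem empiricalCov_eq_zero_of_const_left {f : ι → ℝ} (hf : ∀ i ∈ s, ∀ j ∈ s, f i = f j)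
    (g : ι → ℝ) : s.empiricalCov f g = 0 := by
  obtain rfl | ⟨i₀, hi₀⟩ := s.eq_empty_or_nonempty
  · simp [empiricalCov]
  have hconst : ∀ i ∈ s, f i = f i₀ := fun i hi => hf i hi i₀ hi₀
  rw [empiricalCov, expect_congr rfl fun i hi => by rw [hconst i hi],
    expect_congr rfl hconst, expect_const ⟨i₀, hi₀⟩, mul_expect, sub_self]

theorem expect_mul_sub_div_sub_empiricalCov_div {q : ℝ} (hq : q ≠ 0) (f g : ι → ℝ)
    (hg : 𝔼 i ∈ s, g i ≠ 0) :
    𝔼 i ∈ s, f i * ((g i - q) / q) - s.empiricalCov f g / 𝔼 i ∈ s, g i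
      = (𝔼 i ∈ s, f i * g i) * (q⁻¹ - (𝔼 i ∈ s, g i)⁻¹) := by
  have hsplit : ∀ i ∈ s, f i * ((g i - q) / q) = f i * g i * q⁻¹ - f i := fun i _ => by
    field_simp
  rw [expect_congr rfl hsplit, expect_sub_distrib, ← expect_mul, empiricalCov]
  field_simp
  ring

variable {s} in
theorem abs_expect_mul_sub_div_sub_empiricalCov_div_lt (hs : s.Nonempty) {f g : ι → ℝ}
    {M ε δ q : ℝ} (hε : 0 < ε) (hf : ∀ i ∈ s, |f i| ≤ M) (hg : ∀ i ∈ s, ε ≤ g i ∧ g i ≤ 1)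
    (hq : |q - 𝔼 i ∈ s, g i| < min (ε / 2) (δ * ε ^ 2 / (2 * (|M| + 1)))) :
    |𝔼 i ∈ s, f i * ((g i - q) / q) - s.empiricalCov f g / 𝔼 i ∈ s, g i| < δ := by
  have hgε : ε ≤ 𝔼 i ∈ s, g i := le_expect hs fun i hi => (hg i hi).1
  have hq₀ : q ≠ 0 := by
    have := (abs_lt.mp (hq.trans_le (min_le_left _ _))).1
    linarith
  have hfg : |𝔼 i ∈ s, f i * g i| ≤ M := by
    refine (abs_expect_le _ _).trans (expect_le hs fun i hi => ?_)
    have hgi : |g i| ≤ 1 := abs_le.mpr ⟨by linarith [hg i hi], (hg i hi).2⟩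
    rw [abs_mul]
    exact (mul_le_of_le_one_right (abs_nonneg _) hgi).trans (hf i hi)
  rw [expect_mul_sub_div_sub_empiricalCov_div s hq₀ f g (by linarith)]
  exact abs_mul_inv_sub_inv_lt hε hgε hfg hq

end Finset

theorem MeasureTheory.tendstoInMeasure_zero_of_abs_lt_imp {ι Ω : Type*} [MeasurableSpace Ω]
    {μ : Measure Ω} {l : Filter ι} {f g : ι → Ω → ℝ}
    (hg : TendstoInMeasure μ g l fun _ => 0)
    (h : ∀ δ > 0, ∃ η > 0, ∀ᶠ i in l, ∀ ω, |g i ω| < η → |f i ω| < δ) :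
    TendstoInMeasure μ f l fun _ => 0 := by
  rw [tendstoInMeasure_iff_dist] at hg ⊢
  intro δ hδ
  obtain ⟨η, hη, hfg⟩ := h δ hδ
  refine tendsto_of_tendsto_of_tendsto_of_le_of_le' tendsto_const_nhds (hg η hη)
    (Eventually.of_forall fun _ => zero_le) ?_
  filter_upwards [hfg] with i hi
  refine measure_mono fun ω hω => ?_
  simp only [Set.mem_ofPred_eq, Real.dist_eq, sub_zero] at hω ⊢
  contrapose! hω
  exact hi ω hω

open Finset in
theorem empirical_exposure_probability_bias_general
    {Ω : Type*} [MeasurableSpace Ω] (P : Measure Ω)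
    (G : (n : ℕ) → Fin n → Ω → ℝ)
    (p : (n : ℕ) → Fin n → ℝ)
    (ε : ℝ) (hε : 0 < ε) (hpb : ∀ n i, ε ≤ p n i ∧ p n i ≤ 1)
    (Ψ : (n : ℕ) → Fin n → ℝ)
    (M : ℝ) (hΨb : ∀ n i, |Ψ n i| ≤ M)
    -- weak law of large numbers for the empirical frequency
    (hwlln : TendstoInMeasure P
      (fun (n : ℕ) (ω : Ω) => (1 / n : ℝ) * ∑ i, G n i ω - (1 / n : ℝ) * ∑ i, p n i)
      atTop (fun _ => (0 : ℝ))) :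
    (TendstoInMeasure P
      (fun (n : ℕ) (ω : Ω) =>
        (1 / n : ℝ) * ∑ i, Ψ n i * ((p n i - (1 / n : ℝ) * ∑ j, G n j ω)
            / ((1 / n : ℝ) * ∑ j, G n j ω))
          - ((1 / n : ℝ) * ∑ i, Ψ n i * p n i
              - ((1 / n : ℝ) * ∑ i, Ψ n i) * ((1 / n : ℝ) * ∑ i, p n i))
            / ((1 / n : ℝ) * ∑ i, p n i))
      atTop (fun _ => (0 : ℝ)))
    ∧ ((∀ n, (∀ i j, Ψ n i = Ψ n j) ∨ (∀ i j, p n i = p n j)) →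
       TendstoInMeasure P
        (fun (n : ℕ) (ω : Ω) =>
          (1 / n : ℝ) * ∑ i, Ψ n i * ((p n i - (1 / n : ℝ) * ∑ j, G n j ω)
              / ((1 / n : ℝ) * ∑ j, G n j ω)))
        atTop (fun _ => (0 : ℝ))) := by
  simp only [one_div_mul_sum_eq_expect] at hwlln ⊢
  have hbias : TendstoInMeasure P
      (fun n ω => 𝔼 i, Ψ n i * ((p n i - 𝔼 j, G n j ω) / 𝔼 j, G n j ω)
        - univ.empiricalCov (Ψ n) (p n) / 𝔼 i, p n i) atTop fun _ => 0 := by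
    refine tendstoInMeasure_zero_of_abs_lt_imp hwlln fun δ hδ =>
      ⟨min (ε / 2) (δ * ε ^ 2 / (2 * (|M| + 1))), by positivity, ?_⟩
    filter_upwards [eventually_gt_atTop 0] with n hn ω hω
    exact abs_expect_mul_sub_div_sub_empiricalCov_div_lt (univ_nonempty_iff.mpr ⟨⟨0, hn⟩⟩) hε
      (fun i _ => hΨb n i) (fun i _ => hpb n i) hω
  refine ⟨hbias, fun hconst => ?_⟩
  have hcov : ∀ n, univ.empiricalCov (Ψ n) (p n) = 0 := fun n => by
    rcases hconst n with hΨ | hp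
    · exact empiricalCov_eq_zero_of_const_left _ (fun i _ j _ => hΨ i j) _
    · rw [empiricalCov_comm]
      exact empiricalCov_eq_zero_of_const_left _ (fun i _ j _ => hp i j) _
  simpa only [hcov, zero_div, sub_zero] using hbias

/-- Conservative-bias structure of the empirical exposure
probability estimator. For a triangular array of `{0,1}`-valued `G n i` with
`p n i = P(G n i = 1) ∈ [ε, 1]`, `p̄ n = (1/n)∑ᵢ p n i`, empirical frequency
`p̂ n(ω) = (1/n)∑ᵢ G n i (ω)` satisfying `p̂ n − p̄ n → 0` in probability, and
uniformly bounded reals `Ψ n i`, the quantity `(1/n)∑ᵢ Ψ n i·(p n i − p̂ n)/p̂ n`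
converges in probability to `Cov_n(Ψ, p)/p̄ n`; in particular if for each `n` all
`Ψ n i` are equal or all `p n i` are equal, it converges in probability to `0`. -/
theorem empirical_exposure_probability_bias
    {Ω : Type*} [MeasurableSpace Ω] (P : Measure Ω) [IsProbabilityMeasure P]
    (G : (n : ℕ) → Fin n → Ω → ℝ)
    (hGmeas : ∀ n i, Measurable (G n i))
    (hGbin : ∀ n i ω, G n i ω = 0 ∨ G n i ω = 1)
    (p : (n : ℕ) → Fin n → ℝ)
    (hp : ∀ n i, p n i = (P {ω | G n i ω = 1}).toReal)
    (ε : ℝ) (hε : 0 < ε) (hpb : ∀ n i, ε ≤ p n i ∧ p n i ≤ 1)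
    (Ψ : (n : ℕ) → Fin n → ℝ)
    (M : ℝ) (hΨb : ∀ n i, |Ψ n i| ≤ M)
    -- weak law of large numbers for the empirical frequency
    (hwlln : TendstoInMeasure P
      (fun (n : ℕ) (ω : Ω) => (1 / n : ℝ) * ∑ i, G n i ω - (1 / n : ℝ) * ∑ i, p n i)
      atTop (fun _ => (0 : ℝ))) :
    (TendstoInMeasure P
      (fun (n : ℕ) (ω : Ω) =>
        (1 / n : ℝ) * ∑ i, Ψ n i * ((p n i - (1 / n : ℝ) * ∑ j, G n j ω)
            / ((1 / n : ℝ) * ∑ j, G n j ω))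
          - ((1 / n : ℝ) * ∑ i, Ψ n i * p n i
              - ((1 / n : ℝ) * ∑ i, Ψ n i) * ((1 / n : ℝ) * ∑ i, p n i))
            / ((1 / n : ℝ) * ∑ i, p n i))
      atTop (fun _ => (0 : ℝ)))
    ∧ ((∀ n, (∀ i j, Ψ n i = Ψ n j) ∨ (∀ i j, p n i = p n j)) →
       TendstoInMeasure P
        (fun (n : ℕ) (ω : Ω) =>
          (1 / n : ℝ) * ∑ i, Ψ n i * ((p n i - (1 / n : ℝ) * ∑ j, G n j ω)
              / ((1 / n : ℝ) * ∑ j, G n j ω)))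
        atTop (fun _ => (0 : ℝ))) :=
  empirical_exposure_probability_bias_general P G p ε hε hpb Ψ M hΨb hwlln
end
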